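/- arXiv:1207.0052 — 4 statements merged into one kernel-verified Lean document; each statement's English description precedes it below -/
import Mathlib

section
/- There exists a class of languages over a finite alphabet that is not identifiable in the limit from positive presentations: specifically, for any infinite strictly increasing chain of finite languages L_1 ⊂ L_2 ⊂ ⋯ together with their union L_∞, no learning function A (mapping finite sequences of strings to language hypotheses from this class) identifies every language of the class {L_1, L_2, …, L_∞} in the limit from positive presentations. -/
/-!
If a learner `A` identified each `L i` and their union `L∞` in the limit, then every finite
sequence drawn from `L (k + 1)` would extend, within `L (k + 1)`, to one on which `A` guesses
`L (k + 1)`: continue it by a presentation of `L (k + 1)`. Alternating such extensions with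
enumerations of the finite languages `L (k + 1)` builds a presentation of `L∞` on which `A`
guesses each `L (k + 1)` in turn, so it never settles on `L∞`.
-/

/-- The finite sequence of the first `t` elements of a positive presentation `f`. -/
def prefixSeq {α : Type*} (f : ℕ → List α) (t : ℕ) : List (List α) :=
  (List.range t).map f

/-- `f` is a positive presentation of the language `L`: an infinite sequence of strings
whose set of elements is exactly `L`. -/
def Presents {α : Type*} (f : ℕ → List α) (L : Set (List α)) : Prop :=
  Set.range f = L

/-- The learner `A` identifies `L` in the limit from the positive presentation `f`:
there is a time `t` such that for all `u ≥ t` the hypothesis is unchanged,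
and this hypothesis equals `L`. -/
def IdentifiesOn {α : Type*} (A : List (List α) → Set (List α))
    (f : ℕ → List α) (L : Set (List α)) : Prop :=
  ∃ t : ℕ, (∀ u : ℕ, t ≤ u → A (prefixSeq f u) = A (prefixSeq f t)) ∧
    A (prefixSeq f t) = L

section PrefixChain

variable {α : Type*} {S : ℕ → List (List α)}

theorem exists_prefixSeq_length_eq_of_isPrefix_succ (hpre : ∀ n, S n <+: S (n + 1))
    (hlen : ∀ n, n ≤ (S n).length) :
    ∃ f : ℕ → List α, (∀ n, prefixSeq f (S n).length = S n) ∧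
      Set.range f = {x | ∃ n, x ∈ S n} := by
  have hget : ∀ {m n j} (hm : j < (S m).length) (hn : j < (S n).length),
      (S m)[j] = (S n)[j] := by
    intro m n j hm hn
    rcases le_total m n with h | h
    · exact (Nat.rel_of_forall_rel_succ_of_le _ hpre h).getElem hm
    · exact ((Nat.rel_of_forall_rel_succ_of_le _ hpre h).getElem hn).symm
  have hlt : ∀ j, j < (S (j + 1)).length := fun j => hlen (j + 1)
  refine ⟨fun j => (S (j + 1))[j]'(hlt j), fun n => ?_, ?_⟩
  · refine List.ext_getElem (by simp [prefixSeq]) fun j _ hj => ?_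
    simpa [prefixSeq] using hget (hlt j) hj
  · ext x
    constructor
    · rintro ⟨j, rfl⟩
      exact ⟨j + 1, List.getElem_mem _⟩
    · rintro ⟨n, hx⟩
      obtain ⟨j, hj, rfl⟩ := List.getElem_of_mem hx
      exact ⟨j, hget (hlt j) hj⟩

theorem eventually_eq_of_isPrefix_succ {A : List (List α) → Set (List α)} {L : Set (List α)}
    (hid : ∀ f, Presents f L → IdentifiesOn A f L) (hpre : ∀ n, S n <+: S (n + 1))
    (hlen : ∀ n, n ≤ (S n).length) (hS : {x | ∃ n, x ∈ S n} = L) :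
    ∀ᶠ n in Filter.atTop, A (S n) = L := by
  obtain ⟨f, hfS, hrange⟩ := exists_prefixSeq_length_eq_of_isPrefix_succ hpre hlen
  obtain ⟨t, hconst, hval⟩ := hid f (hrange.trans hS)
  filter_upwards [Filter.eventually_ge_atTop t] with n hn
  rw [← hfS n, hconst _ (hn.trans (hlen n)), hval]

end PrefixChain

theorem exists_append_eq_of_identifies {α : Type*} {A : List (List α) → Set (List α)}
    {L : Set (List α)} (hid : ∀ f, Presents f L → IdentifiesOn A f L) {g : ℕ → List α}
    (hg : Presents g L) {ρ : List (List α)} (hρ : ∀ x ∈ ρ, x ∈ L) :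
    ∃ σ : List (List α), (∀ x ∈ σ, x ∈ L) ∧ A (ρ ++ σ) = L := by
  have hσ : ∀ n, ∀ x ∈ (List.range n).map g, x ∈ L := by
    rintro n x hx
    obtain ⟨j, -, rfl⟩ := List.mem_map.mp hx
    exact hg ▸ Set.mem_range_self j
  have hpre : ∀ n, ρ ++ (List.range n).map g <+: ρ ++ (List.range (n + 1)).map g := by
    intro n
    simp [List.range_succ]
  have hlen : ∀ n, n ≤ (ρ ++ (List.range n).map g).length := by simp
  have hcontent : {x | ∃ n, x ∈ ρ ++ (List.range n).map g} = L := by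
    ext x
    constructor
    · rintro ⟨n, hx⟩
      rcases List.mem_append.mp hx with hx | hx
      exacts [hρ x hx, hσ n x hx]
    · intro hx
      obtain ⟨j, rfl⟩ : x ∈ Set.range g := hg ▸ hx
      exact ⟨j + 1, List.mem_append_right _ (List.mem_map_of_mem List.self_mem_range_succ)⟩
  obtain ⟨n, hn⟩ := (eventually_eq_of_isPrefix_succ hid hpre hlen hcontent).exists
  exact ⟨_, hσ n, hn⟩

theorem exists_isPrefix_chain_forall_eq {α : Type*} {A : List (List α) → Set (List α)}
    {L : ℕ → Set (List α)} (hmono : Monotone L) (hfin : ∀ k, (L k).Finite)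
    (hne : ∀ k, (L (k + 1)).Nonempty)
    (hext : ∀ k ρ, (∀ x ∈ ρ, x ∈ L (k + 1)) →
      ∃ σ : List (List α), (∀ x ∈ σ, x ∈ L (k + 1)) ∧ A (ρ ++ σ) = L (k + 1)) :
    ∃ T : ℕ → List (List α), (∀ n, T n <+: T (n + 1)) ∧ (∀ n, n ≤ (T n).length) ∧
      {x | ∃ n, x ∈ T n} = ⋃ k, L k ∧ ∀ k, A (T (k + 1)) = L (k + 1) := by
  have step : ∀ k ρ, ∃ σ : List (List α), (∀ x ∈ ρ, x ∈ L (k + 1)) →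
      (∀ x ∈ σ, x ∈ L (k + 1)) ∧ A (ρ ++ σ) = L (k + 1) := by
    intro k ρ
    by_cases hρ : ∀ x ∈ ρ, x ∈ L (k + 1)
    · obtain ⟨σ, hσ⟩ := hext k ρ hρ
      exact ⟨σ, fun _ => hσ⟩
    · exact ⟨[], fun h => absurd h hρ⟩
  choose σ hσ using step
  let e : ℕ → List (List α) := fun k => (hfin k).toFinset.toList
  have he : ∀ k x, x ∈ e k ↔ x ∈ L k := fun k x => by simp [e]
  -- Stage `k + 1` first enumerates all of `L (k + 1)`, then drives `A` to guess `L (k + 1)`.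
  let T : ℕ → List (List α) := fun n =>
    Nat.rec [] (fun k ρ => ρ ++ e (k + 1) ++ σ k (ρ ++ e (k + 1))) n
  have hT_succ : ∀ k, T (k + 1) = T k ++ e (k + 1) ++ σ k (T k ++ e (k + 1)) := fun _ => rfl
  have hTL : ∀ n, ∀ x ∈ T n, x ∈ L n := by
    intro n
    induction n with
    | zero => simp [T]
    | succ k ih =>
      have hρ : ∀ x ∈ T k ++ e (k + 1), x ∈ L (k + 1) := by
        intro x hx
        rcases List.mem_append.mp hx with hx | hx
        exacts [hmono k.le_succ (ih x hx), (he _ x).mp hx]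
      intro x hx
      rw [hT_succ, List.mem_append] at hx
      exact hx.elim (hρ x) ((hσ k _ hρ).1 x)
  refine ⟨T, fun n => ?_, fun n => ?_, ?_, fun k => ?_⟩
  · rw [hT_succ, List.append_assoc]
    exact List.prefix_append _ _
  · induction n with
    | zero => exact Nat.zero_le _
    | succ k ih =>
      obtain ⟨x, hx⟩ := hne k
      have : 0 < (e (k + 1)).length := List.length_pos_of_mem ((he _ x).mpr hx)
      rw [hT_succ]
      simp only [List.length_append]
      omega
  · ext x
    simp only [Set.mem_ofPred_eq, Set.mem_iUnion]
    constructor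
    · rintro ⟨n, hx⟩
      exact ⟨n, hTL n x hx⟩
    · rintro ⟨k, hx⟩
      refine ⟨k + 1, ?_⟩
      rw [hT_succ]
      exact List.mem_append_left _ (List.mem_append_right _ ((he _ x).mpr (hmono k.le_succ hx)))
  · rw [hT_succ]
    refine (hσ k _ fun x hx => ?_).2
    rcases List.mem_append.mp hx with hx | hx
    exacts [hmono k.le_succ (hTL k x hx), (he _ x).mp hx]

theorem gold_unlearnable_general {α : Type*}
    (L : ℕ → Set (List α))
    (hfin : ∀ i, (L i).Finite)
    (hchain : ∀ i, L i ⊂ L (i + 1))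
    (A : List (List α) → Set (List α)) :
    ¬ (∀ M ∈ Set.range L ∪ {⋃ i, L i},
        ∀ f : ℕ → List α, Presents f M → IdentifiesOn A f M) := by
  intro H
  have hid : ∀ k, ∀ f, Presents f (L k) → IdentifiesOn A f (L k) :=
    fun k => H _ (Or.inl ⟨k, rfl⟩)
  have hne : ∀ k, (L (k + 1)).Nonempty := fun k =>
    let ⟨x, hx, _⟩ := Set.exists_of_ssubset (hchain k); ⟨x, hx⟩
  obtain ⟨T, hpre, hlen, hcontent, hAT⟩ :=
    exists_isPrefix_chain_forall_eq (monotone_nat_of_le_succ fun k => (hchain k).subset) hfin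
      hne fun k ρ hρ =>
        let ⟨g, hg⟩ := (hfin (k + 1)).countable.exists_eq_range (hne k)
        exists_append_eq_of_identifies (hid (k + 1)) hg.symm hρ
  obtain ⟨n, hn⟩ :=
    (eventually_eq_of_isPrefix_succ (H _ (Or.inr rfl)) hpre hlen hcontent).exists_forall_of_atTop
  have hLU : L (n + 1) = ⋃ k, L k := (hAT n).symm.trans (hn (n + 1) n.le_succ)
  exact (hchain (n + 1)).not_subset (hLU ▸ Set.subset_iUnion L (n + 2))

/-- **Gold.** For any infinite strictly increasing chain of finite languages
`L 0 ⊂ L 1 ⊂ ⋯` over a finite alphabet, together with their union, no learning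
function `A` identifies every language of the class `{L i} ∪ {⋃ i, L i}` in the
limit from positive presentations. -/
theorem gold_unlearnable {α : Type*} [Finite α]
    (L : ℕ → Set (List α))
    (hfin : ∀ i, (L i).Finite)
    (hchain : ∀ i, L i ⊂ L (i + 1))
    (A : List (List α) → Set (List α)) :
    ¬ (∀ M ∈ Set.range L ∪ {⋃ i, L i},
        ∀ f : ℕ → List α, Presents f M → IdentifiesOn A f M) :=
  gold_unlearnable_general L hfin hchain A
end

section
/- Let Γ be the PPCFG constructed from a 3SAT instance (X, C) with nonterminals X ∪ {START} ∪ {x_{i,T}, x_{i,F}}, terminals C, start symbol START, fixed productions START → x_1 x_2 ⋯ x_n, x_i → ε for all i, x_{j,T} → c_i whenever x_j ∈ c_i, x_{j,F} → c_i whenever ¬x_j ∈ c_i, and parameter groups (x_i → x_{i,T}, x_i → x_{i,F}). If there exists a parameter setting p such that every clause symbol c_i ∈ C is derivable in Γ_p from START, then the 3SAT instance is satisfiable. -/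
/-- One rewriting step using some rule from the rule set `R`. -/
def CFProduces {T N : Type*} (R : Set (ContextFreeRule T N))
    (u v : List (Symbol T N)) : Prop :=
  ∃ r ∈ R, r.Rewrites u v

/-- Derivation: reflexive-transitive closure of single rewriting steps. -/
def CFDerives {T N : Type*} (R : Set (ContextFreeRule T N)) :
    List (Symbol T N) → List (Symbol T N) → Prop :=
  Relation.ReflTransGen (CFProduces R)

/-- The language generated from start symbol `S` by the rules `R`. -/
def CFLanguage {T N : Type*} (R : Set (ContextFreeRule T N)) (S : N) :
    Set (List T) :=
  { w | CFDerives R [Symbol.nonterminal S] (w.map Symbol.terminal) }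

/-- Nonterminals of the 3SAT grammar: `START`, the variable symbols `x i`, and
the truth-marked variable symbols `x_{i,T}` and `x_{i,F}`. -/
inductive SatNT (n : ℕ)
  | start
  | x (i : Fin n)
  | xT (i : Fin n)
  | xF (i : Fin n)

/-- The PPCFG `Γ_p` built from a 3SAT instance with `n` variables and `m`
clauses, where `pos c j` (resp. `neg c j`) means the literal `x j` (resp.
`¬ x j`) occurs in clause `c`.  Terminals are the clause symbols.  Fixed
productions: `START → x 1 ⋯ x n`, `x i → ε` for all `i`, `x_{j,T} → c` whenever
`x j ∈ c`, and `x_{j,F} → c` whenever `¬ x j ∈ c`.  The parameter setting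
`p : Fin n → Bool` chooses, in each group `(x i → x_{i,T}, x i → x_{i,F})`,
the first production iff `p i = true`. -/
def satRules {n m : ℕ} (pos neg : Fin m → Fin n → Bool) (p : Fin n → Bool) :
    Set (ContextFreeRule (Fin m) (SatNT n)) :=
  {⟨SatNT.start, List.ofFn fun i : Fin n => Symbol.nonterminal (SatNT.x i)⟩} ∪
  { r | ∃ i : Fin n, r = ⟨SatNT.x i, []⟩ } ∪
  { r | ∃ i : Fin n,
      r = ⟨SatNT.x i, [Symbol.nonterminal (if p i then SatNT.xT i else SatNT.xF i)]⟩ } ∪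
  { r | ∃ c : Fin m, ∃ j : Fin n, pos c j = true ∧ r = ⟨SatNT.xT j, [Symbol.terminal c]⟩ } ∪
  { r | ∃ c : Fin m, ∃ j : Fin n, neg c j = true ∧ r = ⟨SatNT.xF j, [Symbol.terminal c]⟩ }

/-- The 3SAT instance is satisfiable: some truth assignment makes every clause true. -/
def SatSatisfiable {n m : ℕ} (pos neg : Fin m → Fin n → Bool) : Prop :=
  ∃ a : Fin n → Bool, ∀ c : Fin m, ∃ j : Fin n,
    (pos c j = true ∧ a j = true) ∨ (neg c j = true ∧ a j = false)

/-- Each clause contains at most three literals (it is a 3SAT instance). -/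
def ThreeBounded {n m : ℕ} (pos neg : Fin m → Fin n → Bool) : Prop :=
  ∀ c : Fin m, (Finset.univ.filter fun j : Fin n => pos c j = true ∨ neg c j = true).card ≤ 3

/-- Invariant on symbols in sentential forms of `Γ_p`. -/
def SatGood {n m : ℕ} (pos neg : Fin m → Fin n → Bool) (p : Fin n → Bool) :
    Symbol (Fin m) (SatNT n) → Prop
  | Symbol.terminal c => ∃ j, (pos c j = true ∧ p j = true) ∨ (neg c j = true ∧ p j = false)
  | Symbol.nonterminal (SatNT.xT j) => p j = true
  | Symbol.nonterminal (SatNT.xF j) => p j = false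
  | _ => True

lemma satGood_preserved {n m : ℕ} (pos neg : Fin m → Fin n → Bool) (p : Fin n → Bool)
    {u v : List (Symbol (Fin m) (SatNT n))}
    (h : CFDerives (satRules pos neg p) u v)
    (hu : ∀ s ∈ u, SatGood pos neg p s) : ∀ s ∈ v, SatGood pos neg p s := by
  induction h with
  | refl => exact hu
  | tail _ step ih =>
    obtain ⟨r, hrR, hrw⟩ := step
    rw [ContextFreeRule.rewrites_iff] at hrw
    obtain ⟨q1, q2, hb, hc⟩ := hrw
    subst hb hc
    have hin : SatGood pos neg p (Symbol.nonterminal r.input) :=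
      ih _ (by simp)
    have hout : ∀ s ∈ r.output, SatGood pos neg p s := by
      simp only [satRules, Set.mem_union, Set.mem_setOf_eq, Set.mem_singleton_iff] at hrR
      rcases hrR with ((((h1 | h2) | h3) | h4) | h5)
      · subst h1
        intro s hs
        simp only [List.mem_ofFn] at hs
        obtain ⟨i, rfl⟩ := hs
        trivial
      · obtain ⟨i, rfl⟩ := h2
        intro s hs; simp at hs
      · obtain ⟨i, rfl⟩ := h3
        intro s hs
        simp only [List.mem_singleton] at hs
        subst hs
        by_cases hpi : p i = true <;> simp [SatGood, hpi]
      · obtain ⟨c, j, hcj, rfl⟩ := h4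
        intro s hs
        simp only [List.mem_singleton] at hs
        subst hs
        exact ⟨j, Or.inl ⟨hcj, hin⟩⟩
      · obtain ⟨c, j, hcj, rfl⟩ := h5
        intro s hs
        simp only [List.mem_singleton] at hs
        subst hs
        exact ⟨j, Or.inr ⟨hcj, hin⟩⟩
    intro s hs
    simp only [List.mem_append] at hs
    rcases hs with (hs | hs) | hs
    · exact ih _ (by simp [hs])
    · exact hout _ hs
    · exact ih _ (by simp [hs])

/-- If there exists a parameter setting `p` such that every clause symbol is
derivable from `START` in `Γ_p`, then the 3SAT instance is satisfiable. -/
theorem sat_of_ppcfg_setting {n m : ℕ} (pos neg : Fin m → Fin n → Bool)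
    (h3 : ThreeBounded pos neg) (p : Fin n → Bool)
    (hall : ∀ c : Fin m, [c] ∈ CFLanguage (satRules pos neg p) SatNT.start) :
    SatSatisfiable pos neg := by
  refine ⟨p, fun c => ?_⟩
  have h := satGood_preserved pos neg p (hall c) ?_ (Symbol.terminal c) (by simp)
  · exact h
  · intro s hs
    simp only [List.mem_singleton] at hs
    subst hs
    trivial
end

section
/- With the same 3SAT-to-PPCFG construction: if the 3SAT instance is satisfiable, then there exists a parameter setting p (choosing x_i → x_{i,T} when the satisfying assignment sets x_i true, and x_i → x_{i,F} otherwise) such that every clause symbol c_i is derivable from START in Γ_p. -/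
namespace CFDerives

variable {T N : Type*} {R : Set (ContextFreeRule T N)}

lemma append_left {u v : List (Symbol T N)} (h : CFDerives R u v) (w : List (Symbol T N)) :
    CFDerives R (w ++ u) (w ++ v) := by
  induction h with
  | refl => exact .refl
  | tail _ hstep ih =>
    obtain ⟨r, hr, hrw⟩ := hstep
    exact ih.tail ⟨r, hr, hrw.append_left w⟩

lemma append_right {u v : List (Symbol T N)} (h : CFDerives R u v) (w : List (Symbol T N)) :
    CFDerives R (u ++ w) (v ++ w) := by
  induction h with
  | refl => exact .refl
  | tail _ hstep ih =>
    obtain ⟨r, hr, hrw⟩ := hstep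
    exact ih.tail ⟨r, hr, hrw.append_right w⟩

lemma append {u u' v v' : List (Symbol T N)} (hu : CFDerives R u u') (hv : CFDerives R v v') :
    CFDerives R (u ++ v) (u' ++ v') :=
  (hu.append_right v).trans (hv.append_left u')

lemma of_mem {A : N} {w : List (Symbol T N)} (h : ⟨A, w⟩ ∈ R) :
    CFDerives R [Symbol.nonterminal A] w :=
  .single ⟨_, h, ContextFreeRule.Rewrites.input_output⟩

lemma map_nonterminal_nil {l : List N} (hl : ∀ A ∈ l, ⟨A, []⟩ ∈ R) :
    CFDerives R (l.map Symbol.nonterminal) [] := by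
  induction l with
  | nil => exact .refl
  | cons A l ih =>
    simpa using (of_mem (hl A List.mem_cons_self)).append
      (ih fun B hB => hl B (List.mem_cons_of_mem A hB))

lemma map_nonterminal_singleton {l : List N} {A : N} (hA : A ∈ l)
    (hl : ∀ B ∈ l, ⟨B, []⟩ ∈ R) :
    CFDerives R (l.map Symbol.nonterminal) [Symbol.nonterminal A] := by
  obtain ⟨s, t, rfl⟩ := List.append_of_mem hA
  have hs : CFDerives R (s.map Symbol.nonterminal) [] :=
    map_nonterminal_nil fun B hB => hl B (by simp [hB])
  have ht : CFDerives R (t.map Symbol.nonterminal) [] :=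
    map_nonterminal_nil fun B hB => hl B (by simp [hB])
  simpa using hs.append (append (u := [Symbol.nonterminal A]) .refl ht)

end CFDerives

section SatGrammar

variable {n m : ℕ} {pos neg : Fin m → Fin n → Bool} {p : Fin n → Bool}

lemma satRules_start_derives_vars :
    CFDerives (satRules pos neg p) [Symbol.nonterminal SatNT.start]
      (List.ofFn fun i => Symbol.nonterminal (SatNT.x i)) :=
  CFDerives.of_mem (by simp [satRules])

lemma satRules_vars_derives_var (j : Fin n) :
    CFDerives (satRules pos neg p) (List.ofFn fun i => Symbol.nonterminal (SatNT.x i))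
      [Symbol.nonterminal (SatNT.x j)] := by
  rw [show (List.ofFn fun i => Symbol.nonterminal (SatNT.x i)) =
      (List.ofFn SatNT.x).map Symbol.nonterminal from List.map_ofFn.symm]
  exact CFDerives.map_nonterminal_singleton (by simp) fun B hB => by
    obtain ⟨i, rfl⟩ := List.mem_ofFn.mp hB
    simp [satRules]

lemma satRules_var_derives_clause {c : Fin m} {j : Fin n}
    (hj : (pos c j = true ∧ p j = true) ∨ (neg c j = true ∧ p j = false)) :
    CFDerives (satRules pos neg p) [Symbol.nonterminal (SatNT.x j)] [Symbol.terminal c] := by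
  have hchoose : CFDerives (satRules pos neg p) [Symbol.nonterminal (SatNT.x j)]
      [Symbol.nonterminal (if p j then SatNT.xT j else SatNT.xF j)] :=
    CFDerives.of_mem (by simp [satRules])
  refine hchoose.trans ?_
  rcases hj with ⟨hpos, hp⟩ | ⟨hneg, hp⟩
  · rw [hp, if_pos rfl]
    exact CFDerives.of_mem (by simp [satRules, hpos])
  · rw [hp, if_neg Bool.false_ne_true]
    exact CFDerives.of_mem (by simp [satRules, hneg])

end SatGrammar

theorem ppcfg_setting_of_sat_general {n m : ℕ} (pos neg : Fin m → Fin n → Bool)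
    (hsat : SatSatisfiable pos neg) :
    ∃ p : Fin n → Bool,
      (∀ c : Fin m, ∃ j : Fin n,
        (pos c j = true ∧ p j = true) ∨ (neg c j = true ∧ p j = false)) ∧
      ∀ c : Fin m, [c] ∈ CFLanguage (satRules pos neg p) SatNT.start := by
  obtain ⟨a, ha⟩ := hsat
  refine ⟨a, ha, fun c => ?_⟩
  obtain ⟨j, hj⟩ := ha c
  exact satRules_start_derives_vars.trans
    ((satRules_vars_derives_var j).trans (satRules_var_derives_clause hj))

/-- If the 3SAT instance is satisfiable, then there exists a parameter setting
`p` — namely choosing `x i → x_{i,T}` exactly when the satisfying assignment `a`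
sets `x i` true, i.e. `p = a` — such that every clause symbol is derivable from
`START` in `Γ_p`. -/
theorem ppcfg_setting_of_sat {n m : ℕ} (pos neg : Fin m → Fin n → Bool)
    (h3 : ThreeBounded pos neg)
    (hsat : SatSatisfiable pos neg) :
    ∃ p : Fin n → Bool,
      (∀ c : Fin m, ∃ j : Fin n,
        (pos c j = true ∧ p j = true) ∨ (neg c j = true ∧ p j = false)) ∧
      ∀ c : Fin m, [c] ∈ CFLanguage (satRules pos neg p) SatNT.start :=
  ppcfg_setting_of_sat_general pos neg hsat
end

section
/- In the factoring PPCSG Γ for composite N: if P and Q are positive integers with P ≤ Q and PQ = N, then the distinguished string w (the concatenation of terminals c_i over all bit positions i where the binary representation of N has a 1) belongs to L(Γ_{s_P}), where s_P is the parameter setting whose group choices encode the binary digits of P. -/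
/-!
Under the setting `s_P`, the rule for `A_j` emits `B_j` exactly when bit `j` of `P` is set, and
`B_j` doubles down to `2^j` copies of `B_0`; so `A_J` derives `B_0^P`, as `P ≤ √N ≤ 2^J`.
Hence `S ⇒ A_J^Q ⇒ B_0^(PQ) = C_0^N`. The carry rules turn `C_k C_k` into `C_(k+1)`, so they
run a binary counter: pairing off the copies of `C_0` leaves one `C_0` iff `N` is odd and
`⌊N/2⌋` copies of `C_1`, and by induction `C_0^N` derives `C_k` for exactly the set bits `k`
of `N`, in descending order, which the terminal rules turn into `w`.
-/

/-- A general (context-sensitive style) rewriting rule: a left-hand side and a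
right-hand side, both strings of symbols. -/
structure GenRule (T N : Type*) where
  lhs : List (Symbol T N)
  rhs : List (Symbol T N)

/-- One rewriting step: some rule of `R` is applied to a contiguous substring. -/
def GStep {T N : Type*} (R : Set (GenRule T N)) (u v : List (Symbol T N)) : Prop :=
  ∃ r ∈ R, ∃ x y : List (Symbol T N), u = x ++ r.lhs ++ y ∧ v = x ++ r.rhs ++ y

/-- Rewriting: the reflexive-transitive closure of single steps. -/
def GDerives {T N : Type*} (R : Set (GenRule T N)) :
    List (Symbol T N) → List (Symbol T N) → Prop :=
  Relation.ReflTransGen (GStep R)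

/-- Nonterminals of the factoring PPCSG. -/
inductive FNT
  | S
  | A (j : ℕ)
  | B (j : ℕ)
  | C (k : ℕ)
  | Z (k : ℕ)

/-- Shorthand for nonterminal symbols (terminals are naturals, `k` coding `c_k`). -/
def nt (x : FNT) : Symbol ℕ FNT := Symbol.nonterminal x

/-- The rules of the factoring PPCSG `Γ_s`, where `J = ⌈lg √N⌉`, `K = ⌈lg N⌉`
and the parameter setting is given by bits `s : ℕ → Bool` (group
`(A j → A (j-1), A j → B j A (j-1))` takes its second option iff `s j`, and
group `(A 0 → B 0, A 0 → ε)` takes `B 0` iff `s 0`). -/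
def factRules (J K : ℕ) (s : ℕ → Bool) : Set (GenRule ℕ FNT) :=
  { r |
    r = ⟨[nt .S], [nt (.A J), nt .S]⟩ ∨
    r = ⟨[nt .S], []⟩ ∨
    r = ⟨[nt (.A 0)], if s 0 then [nt (.B 0)] else []⟩ ∨
    (∃ j : ℕ, 1 ≤ j ∧ j ≤ J ∧
      r = ⟨[nt (.A j)],
        if s j then [nt (.B j), nt (.A (j - 1))] else [nt (.A (j - 1))]⟩) ∨
    (∃ j : ℕ, 1 ≤ j ∧ j ≤ J ∧
      r = ⟨[nt (.B j)], [nt (.B (j - 1)), nt (.B (j - 1))]⟩) ∨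
    r = ⟨[nt (.B 0)], [nt (.C 0)]⟩ ∨
    (∃ k ≤ K, r = ⟨[nt (.C k), nt (.C k)], [nt (.C k), nt (.Z k)]⟩) ∨
    (∃ k ≤ K, r = ⟨[nt (.C k), nt (.Z k)], [nt (.C (k + 1)), nt (.Z k)]⟩) ∨
    (∃ k ≤ K, r = ⟨[nt (.C (k + 1)), nt (.Z k)], [nt (.C (k + 1))]⟩) ∨
    (∃ k ≤ K, r = ⟨[nt (.C k)], [Symbol.terminal k]⟩) }

/-- The distinguished string for `m`: one terminal `c_i` for each bit position
`i` where the binary representation of `m` has a `1`, in (descending) order. -/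
def wStr (m : ℕ) : List ℕ :=
  ((List.range (Nat.size m)).filter fun i => m.testBit i).reverse

/-- The number `P_s` whose binary digits are given by the parameter setting `s`
(bits `0` through `J`). -/
def Ps (J : ℕ) (s : ℕ → Bool) : ℕ :=
  ∑ j ∈ Finset.range (J + 1), if s j then 2 ^ j else 0

namespace GDerives

variable {T N : Type*} {R : Set (GenRule T N)}

instance : Trans (GDerives R) (GDerives R) (GDerives R) := ⟨Relation.ReflTransGen.trans⟩

protected theorem trans {u v w : List (Symbol T N)} (h₁ : GDerives R u v)
    (h₂ : GDerives R v w) : GDerives R u w :=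
  Relation.ReflTransGen.trans h₁ h₂

protected theorem refl {u : List (Symbol T N)} : GDerives R u u := Relation.ReflTransGen.refl

theorem of_mem {r : GenRule T N} (hr : r ∈ R) : GDerives R r.lhs r.rhs :=
  .single ⟨r, hr, [], [], by simp, by simp⟩

theorem append_context {u v : List (Symbol T N)} (x y : List (Symbol T N))
    (h : GDerives R u v) : GDerives R (x ++ u ++ y) (x ++ v ++ y) := by
  induction h with
  | refl => exact .refl
  | tail _ hstep ih =>
    obtain ⟨r, hr, a, b, rfl, rfl⟩ := hstep
    exact ih.tail ⟨r, hr, x ++ a, b ++ y, by simp, by simp⟩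

theorem append {u₁ u₂ v₁ v₂ : List (Symbol T N)} (h₁ : GDerives R u₁ v₁)
    (h₂ : GDerives R u₂ v₂) : GDerives R (u₁ ++ u₂) (v₁ ++ v₂) := by
  have h₁' := append_context [] u₂ h₁
  have h₂' := append_context v₁ [] h₂
  simp only [List.nil_append, List.append_nil] at h₁' h₂'
  exact h₁'.trans h₂'

theorem map {α : Type*} {f g : α → Symbol T N} {l : List α}
    (h : ∀ a ∈ l, GDerives R [f a] [g a]) : GDerives R (l.map f) (l.map g) := by
  induction l with
  | nil => exact .refl
  | cons a l ih =>
    exact (h a (by simp)).append (ih fun b hb => h b (List.mem_cons_of_mem a hb))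

theorem flatten_replicate {u v : List (Symbol T N)} (h : GDerives R u v) :
    ∀ n, GDerives R (List.replicate n u).flatten (List.replicate n v).flatten
  | 0 => .refl
  | n + 1 => by
    simpa only [List.replicate_succ, List.flatten_cons] using h.append (flatten_replicate h n)

theorem replicate_replicate {a b : Symbol T N} {l m : ℕ}
    (h : GDerives R (List.replicate l a) (List.replicate m b)) (n : ℕ) :
    GDerives R (List.replicate (n * l) a) (List.replicate (n * m) b) := by
  simpa [List.flatten_replicate_replicate] using h.flatten_replicate n

end GDerives

theorem wStr_bit {b : Bool} {n : ℕ} (h : Nat.bit b n ≠ 0) :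
    wStr (Nat.bit b n) = (wStr n).map Nat.succ ++ if b then [0] else [] := by
  have hbits : (fun i => (Nat.bit b n).testBit i) ∘ Nat.succ = fun i => n.testBit i := by
    funext i; exact Nat.testBit_bit_succ i b n
  rw [wStr, Nat.size_bit h, List.range_succ_eq_map, List.filter_cons, List.filter_map, hbits]
  cases b <;> simp [wStr, List.map_reverse]

theorem lt_size_of_mem_wStr {m i : ℕ} (h : i ∈ wStr m) : i < m.size := by
  simpa using List.mem_of_mem_filter (List.mem_reverse.mp h)

theorem Ps_testBit (J P : ℕ) : Ps J P.testBit = P % 2 ^ (J + 1) := by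
  induction J with
  | zero => cases h : P.testBit 0 <;> simp_all [Ps, Nat.testBit_zero]
  | succ J ih =>
    rw [Ps, Finset.sum_range_succ, ← Ps, ih, Nat.mod_pow_succ (k := J + 1),
      Nat.testBit_eq_decide_div_mod_eq]
    rcases Nat.mod_two_eq_zero_or_one (P / 2 ^ (J + 1)) with h | h <;> simp [h]

namespace factRules

variable (J K : ℕ) (s : ℕ → Bool)

local notation "Γ" => factRules J K s

theorem S_derives_replicate_A :
    ∀ q, GDerives Γ [nt .S] (List.replicate q (nt (.A J)))
  | 0 => .of_mem (r := ⟨[nt .S], []⟩) (by simp [factRules, nt])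
  | q + 1 =>
    calc GDerives Γ [nt .S] ([nt (.A J)] ++ [nt .S]) :=
          .of_mem (r := ⟨_, _⟩) (by simp [factRules, nt])
      GDerives Γ _ ([nt (.A J)] ++ List.replicate q (nt (.A J))) :=
          GDerives.append .refl (S_derives_replicate_A q)

theorem B_derives_replicate_B_zero :
    ∀ j ≤ J, GDerives Γ [nt (.B j)] (List.replicate (2 ^ j) (nt (.B 0)))
  | 0, _ => .refl
  | j + 1, hj =>
    calc GDerives Γ [nt (.B (j + 1))] ([nt (.B j)] ++ [nt (.B j)]) :=
          .of_mem (r := ⟨_, _⟩) (by simp [factRules, nt]; omega)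
      GDerives Γ _ (List.replicate (2 ^ (j + 1)) (nt (.B 0))) := by
        rw [pow_succ, mul_two, List.replicate_add]
        have ih := B_derives_replicate_B_zero j (by omega)
        exact ih.append ih

theorem A_derives_replicate_B_zero :
    ∀ j ≤ J, GDerives Γ [nt (.A j)] (List.replicate (Ps j s) (nt (.B 0)))
  | 0, _ => by
    have h := GDerives.of_mem (R := Γ)
      (r := ⟨[nt (.A 0)], if s 0 then [nt (.B 0)] else []⟩) (by simp [factRules, nt])
    cases hs : s 0 <;> simpa [Ps, hs] using h
  | j + 1, hj => by
    have h := GDerives.of_mem (R := Γ) (r := ⟨[nt (.A (j + 1))],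
        if s (j + 1) then [nt (.B (j + 1)), nt (.A j)] else [nt (.A j)]⟩)
      (by simp [factRules, nt, hj])
    have ih := A_derives_replicate_B_zero j (by omega)
    rw [Ps, Finset.sum_range_succ, ← Ps, Nat.add_comm (Ps j s)]
    cases hs : s (j + 1) <;> simp only [hs, Bool.false_eq_true, if_true, if_false] at h ⊢
    · simpa using h.trans ih
    · rw [List.replicate_add]
      exact h.trans ((B_derives_replicate_B_zero J K s (j + 1) hj).append ih)

theorem C_C_derives_C_succ {k : ℕ} (hk : k ≤ K) :
    GDerives Γ [nt (.C k), nt (.C k)] [nt (.C (k + 1))] :=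
  calc GDerives Γ [nt (.C k), nt (.C k)] [nt (.C k), nt (.Z k)] :=
        .of_mem (r := ⟨_, _⟩) (by simp [factRules, nt, hk])
    GDerives Γ _ [nt (.C (k + 1)), nt (.Z k)] :=
        .of_mem (r := ⟨_, _⟩) (by simp [factRules, nt, hk])
    GDerives Γ _ [nt (.C (k + 1))] :=
        .of_mem (r := ⟨_, _⟩) (by simp [factRules, nt, hk])

theorem replicate_C_derives_wStr (m k : ℕ) (hk : k + m.size ≤ K + 1) :
    GDerives Γ (List.replicate m (nt (.C k))) ((wStr m).map fun i => nt (.C (k + i))) := by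
  induction m using Nat.binaryRec generalizing k with
  | zero => simpa [wStr] using GDerives.refl
  | bit b n ih =>
    by_cases h0 : Nat.bit b n = 0
    · rw [h0]; simpa [wStr] using GDerives.refl
    rw [Nat.size_bit h0] at hk
    have pairs : GDerives Γ (List.replicate (2 * n) (nt (.C k)))
        (List.replicate n (nt (.C (k + 1)))) := by
      simpa [mul_comm] using (C_C_derives_C_succ J K s (k := k) (by omega)).replicate_replicate
        (l := 2) (m := 1) n
    have shift : (fun i => nt (.C (k + i))) ∘ Nat.succ = fun i => nt (.C (k + 1 + i)) := by
      funext i; simp [Nat.add_right_comm, Nat.add_assoc]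
    rw [wStr_bit h0, Nat.bit_val, List.replicate_add, List.map_append, List.map_map, shift]
    refine (pairs.append .refl).trans ((ih (k + 1) (by omega)).append ?_)
    cases b <;> simpa using GDerives.refl

theorem replicate_B_zero_derives_replicate_C_zero (n : ℕ) :
    GDerives Γ (List.replicate n (nt (.B 0))) (List.replicate n (nt (.C 0))) := by
  simpa using (GDerives.of_mem (R := Γ) (r := ⟨[nt (.B 0)], [nt (.C 0)]⟩)
    (by simp [factRules, nt])).replicate_replicate (l := 1) (m := 1) n

theorem wStr_C_derives_terminal {m : ℕ} (hm : m.size ≤ K + 1) :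
    GDerives Γ ((wStr m).map fun i => nt (.C i)) ((wStr m).map Symbol.terminal) :=
  GDerives.map fun i hi =>
    .of_mem (r := ⟨_, _⟩) (by have := lt_size_of_mem_wStr hi; simp [factRules, nt]; omega)

end factRules

open factRules in
theorem factoring_ppcsg_completeness_general (N P Q : ℕ)
    (hle : P ≤ Q) (hmul : P * Q = N) :
    GDerives (factRules (Nat.clog 2 (Nat.sqrt N)) (Nat.clog 2 N) (fun j => P.testBit j))
      [nt .S] ((wStr N).map Symbol.terminal) := by
  set J := Nat.clog 2 (Nat.sqrt N)
  set K := Nat.clog 2 N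
  set Γ := factRules J K (fun j => P.testBit j)
  have hPJ : P < 2 ^ (J + 1) :=
    calc P ≤ N.sqrt := Nat.le_sqrt.2 (hmul ▸ Nat.mul_le_mul_left P hle)
      _ ≤ 2 ^ J := Nat.le_pow_clog one_lt_two _
      _ < 2 ^ (J + 1) := Nat.pow_lt_pow_succ one_lt_two
  have hNK : N.size ≤ K + 1 :=
    Nat.size_le.2 <| (Nat.le_pow_clog one_lt_two N).trans_lt (Nat.pow_lt_pow_succ one_lt_two)
  have hA : GDerives Γ [nt (.A J)] (List.replicate P (nt (.B 0))) := by
    simpa [Ps_testBit, Nat.mod_eq_of_lt hPJ] using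
      A_derives_replicate_B_zero J K (fun j => P.testBit j) J le_rfl
  calc GDerives Γ [nt .S] (List.replicate Q (nt (.A J))) := S_derives_replicate_A J K _ Q
    GDerives Γ _ (List.replicate N (nt (.B 0))) := by
      simpa [← hmul, mul_comm] using hA.replicate_replicate (l := 1) Q
    GDerives Γ _ (List.replicate N (nt (.C 0))) :=
      replicate_B_zero_derives_replicate_C_zero J K _ N
    GDerives Γ _ ((wStr N).map fun i => nt (.C i)) := by
      simpa using replicate_C_derives_wStr J K _ N 0 (by omega)
    GDerives Γ _ ((wStr N).map Symbol.terminal) := wStr_C_derives_terminal J K _ hNK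

/-- In the factoring PPCSG for `N` (a product of two primes): if `P·Q = N` with
`0 < P ≤ Q`, then the distinguished string `w` belongs to `L(Γ_{s_P})`, where the
parameter setting `s_P` encodes the binary digits of `P`. -/
theorem factoring_ppcsg_completeness (N P Q : ℕ)
    (hN : ∃ p q : ℕ, p.Prime ∧ q.Prime ∧ N = p * q)
    (hP : 0 < P) (hle : P ≤ Q) (hmul : P * Q = N) :
    GDerives (factRules (Nat.clog 2 (Nat.sqrt N)) (Nat.clog 2 N) (fun j => P.testBit j))
      [nt .S] ((wStr N).map Symbol.terminal) :=
  factoring_ppcsg_completeness_general N P Q hle hmul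
end
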